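/- For all polytopes P, Q ⊆ ℝ^d, the set of translation vectors x ∈ ℝ^d for which P and Q+x are not in mutual general position has Lebesgue measure zero. -/

import Mathlib

open MeasureTheory Set
open scoped RealInnerProductSpace Pointwise Classical

noncomputable section

/-- Euclidean space ℝ^d. -/
abbrev Euc (d : ℕ) := EuclideanSpace ℝ (Fin d)

variable {d : ℕ}

/-- A polytope: the convex hull of a nonempty finite set of points. -/
def IsPolytope (P : Set (Euc d)) : Prop :=
  ∃ S : Finset (Euc d), S.Nonempty ∧ P = convexHull ℝ (S : Set (Euc d))

/-- A face of a polytope: a nonempty extreme convex subset. -/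
def IsFace (P F : Set (Euc d)) : Prop :=
  F.Nonempty ∧ Convex ℝ F ∧ IsExtreme ℝ P F

/-- The dimension of a set: the dimension of its affine hull. -/
def setDim (F : Set (Euc d)) : ℕ := Module.finrank ℝ (affineSpan ℝ F).direction

/-- The collection of `j`-dimensional faces of `P`. -/
def facesOfDim (P : Set (Euc d)) (j : ℕ) : Set (Set (Euc d)) :=
  {F | IsFace P F ∧ setDim F = j}

/-- Translation of a set by a vector. -/
def shiftSet (x : Euc d) (S : Set (Euc d)) : Set (Euc d) := (· + x) '' S

/-- The normal cone `N(P,F)` of `P` at `F`. -/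
def normalConeOf (P F : Set (Euc d)) : Set (Euc d) :=
  {u | ∀ y ∈ F, ∀ z ∈ P, ⟪z, u⟫ ≤ ⟪y, u⟫}

/-- `n(P,F)`: the intersection of the normal cone with the unit sphere. -/
def nPF (P F : Set (Euc d)) : Set (Euc d) :=
  normalConeOf P F ∩ Metric.sphere (0 : Euc d) 1

/-- Spherical polytopes of dimension `d - j - 1`: exactly the sets of the form `n(P,F)`
for a `j`-face `F` of a polytope `P`. -/
def IsSphericalPolytope (d j : ℕ) (p : Set (Euc d)) : Prop :=
  ∃ P F : Set (Euc d), IsPolytope P ∧ F ∈ facesOfDim P j ∧ p = nPF P F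

/-- `hr j F A = H^j(F ∩ A)`: restricted `j`-dimensional Hausdorff measure. -/
def hr (j : ℕ) (F A : Set (Euc d)) : ℝ := (μH[(j : ℝ)] (F ∩ A)).toReal

/-- Measurability of a functional on polytopes, w.r.t. the Borel σ-algebra of the
Hausdorff metric on the space of polytopes. -/
def PolytopeMeasurable (g : Set (Euc d) → ℝ) : Prop :=
  @Measurable {K : TopologicalSpace.NonemptyCompacts (Euc d) // IsPolytope (K : Set (Euc d))} ℝ
    (borel _) _ (fun K => g (K : Set (Euc d)))

/-- Measurability of a function on `(d-j-1)`-dimensional spherical polytopes. -/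
def SphMeasurable (d j : ℕ) (f : Set (Euc d) → ℝ) : Prop :=
  @Measurable
    {K : TopologicalSpace.NonemptyCompacts (Euc d) // IsSphericalPolytope d j (K : Set (Euc d))} ℝ
    (borel _) _ (fun K => f (K : Set (Euc d)))

/-- `Φ` is a local extension of `φ`. -/
structure IsLocalExtension (φ : Set (Euc d) → ℝ) (Φ : Set (Euc d) → Set (Euc d) → ℝ) : Prop where
  meas : ∀ A : Set (Euc d), MeasurableSet A → PolytopeMeasurable (fun P => Φ P A)
  signed_measure : ∀ P : Set (Euc d), IsPolytope P →
    ∃ μ : SignedMeasure (Euc d), ∀ A : Set (Euc d), MeasurableSet A → Φ P A = μ A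
  total : ∀ P : Set (Euc d), IsPolytope P → φ P = Φ P univ
  covariant : ∀ P : Set (Euc d), IsPolytope P → ∀ (A : Set (Euc d)) (x : Euc d),
    Φ (shiftSet x P) (shiftSet x A) = Φ P A
  locally_determined : ∀ P Q : Set (Euc d), IsPolytope P → IsPolytope Q →
    ∀ A U : Set (Euc d), IsOpen U → P ∩ U = Q ∩ U → A ⊆ U → Φ P A = Φ Q A

/-- The `j`-homogeneous kernel built from an associated function `f j`. -/
def kernelJ (f : ℕ → Set (Euc d) → ℝ) (j : ℕ) (P A : Set (Euc d)) : ℝ :=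
  ∑ᶠ F ∈ facesOfDim P j, f j (nPF P F) * hr j F A

/-- The full kernel built from associated functions `f 0, …, f (d-1)` and the constant `c`. -/
def kernelFull (f : ℕ → Set (Euc d) → ℝ) (c : ℝ) (P A : Set (Euc d)) : ℝ :=
  (∑ j ∈ Finset.range d, kernelJ f j P A) + c * (volume (P ∩ A)).toReal

/-- The `j`-homogeneous part of the kernel, `j = 0, …, d`. -/
def kernelHom (f : ℕ → Set (Euc d) → ℝ) (c : ℝ) (j : ℕ) (P A : Set (Euc d)) : ℝ :=
  if j = d then c * (volume (P ∩ A)).toReal else kernelJ f j P A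

/-- The associated function in degree `j`, with the convention `f_d = c`. -/
def fAssoc (f : ℕ → Set (Euc d) → ℝ) (c : ℝ) (j : ℕ) : Set (Euc d) → ℝ :=
  if j = d then fun _ => c else f j

/-- Gram matrix of a finite family of vectors. -/
def gram {n : Type*} [Fintype n] (w : n → Euc d) : Matrix n n ℝ :=
  Matrix.of fun i l => ⟪w i, w l⟫

/-- An orthonormal basis of a subspace, as a family of vectors of the ambient space. -/
def obFam (U : Submodule ℝ (Euc d)) : Fin (Module.finrank ℝ U) → Euc d :=
  fun i => (stdOrthonormalBasis ℝ U i : Euc d)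

/-- The determinant `[U,V]` of two subspaces: the square root of the Gram determinant of the
concatenation of orthonormal bases of `U^⊥` and `V^⊥`. -/
def subDet2 (U V : Submodule ℝ (Euc d)) : ℝ :=
  Real.sqrt (Matrix.det (gram (Sum.elim (obFam Uᗮ) (obFam Vᗮ))))

/-- The determinant `[U_1,…,U_k]` of a family of subspaces. -/
def subDetFam {k : ℕ} (Us : Fin k → Submodule ℝ (Euc d)) : ℝ :=
  Real.sqrt (Matrix.det (gram
    (fun p : (i : Fin k) × Fin (Module.finrank ℝ (Us i)ᗮ) => obFam (Us p.1)ᗮ p.2)))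

/-- The direction space of a set (of its affine hull). -/
def dirSpace (F : Set (Euc d)) : Submodule ℝ (Euc d) := (affineSpan ℝ F).direction

/-- The mixed spherical polytope `n(P,Q;F,G)`: the intersection with the unit sphere of the
normal cone of `P ∩ (Q+x)` at `F ∩ (G+x)`, for a translation `x` making the relative
interiors of `F` and `G + x` meet (for faces in general relative position this does not
depend on the choice of `x`). -/
def nMixed2 (P Q F G : Set (Euc d)) : Set (Euc d) :=
  if h : ∃ x : Euc d, (intrinsicInterior ℝ F ∩ intrinsicInterior ℝ (shiftSet x G)).Nonempty then
    nPF (P ∩ shiftSet h.choose Q) (F ∩ shiftSet h.choose G)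
  else ∅

/-- The mixed spherical polytope `n(P_1,…,P_k;F_1,…,F_k)`. -/
def nMixedFam {k : ℕ} (P F : Fin k → Set (Euc d)) : Set (Euc d) :=
  if h : ∃ x : Fin k → Euc d,
      (⋂ i, intrinsicInterior ℝ (shiftSet (x i) (F i))).Nonempty then
    nPF (⋂ i, shiftSet (h.choose i) (P i)) (⋂ i, shiftSet (h.choose i) (F i))
  else ∅

/-- The mixed measure `Φ^{(j)}_{m, d-m+j}(P,Q; A × B)`. -/
def mixedMeas2 (f : ℕ → Set (Euc d) → ℝ) (c : ℝ) (j m : ℕ)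
    (P Q A B : Set (Euc d)) : ℝ :=
  ∑ᶠ F ∈ facesOfDim P m, ∑ᶠ G ∈ facesOfDim Q (d - m + j),
    fAssoc f c j (nMixed2 P Q F G) * subDet2 (dirSpace F) (dirSpace G)
      * hr m F A * hr (d - m + j) G B

/-- The mixed measure `Φ^{(j)}_{m_1,…,m_k}(P_1,…,P_k; A_1 × ⋯ × A_k)`. -/
def mixedMeasFam (f : ℕ → Set (Euc d) → ℝ) (c : ℝ) (j : ℕ) {k : ℕ}
    (m : Fin k → ℕ) (P A : Fin k → Set (Euc d)) : ℝ :=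
  ∑ᶠ F ∈ {F : Fin k → Set (Euc d) | ∀ i, F i ∈ facesOfDim (P i) (m i)},
    fAssoc f c j (nMixedFam P F) * subDetFam (fun i => dirSpace (F i))
      * ∏ i, hr (m i) (F i) (A i)

/-- The `j`-th skeleton measure `H^j_skel(P, A)`. -/
def skel (j : ℕ) (P A : Set (Euc d)) : ℝ := ∑ᶠ F ∈ facesOfDim P j, hr j F A

/-- κ_i, the volume of the i-dimensional unit ball. -/
def ballVol (i : ℕ) : ℝ := Real.pi ^ ((i : ℝ) / 2) / Real.Gamma (1 + (i : ℝ) / 2)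

/-- The rotation group SO(d), as a set of matrices. -/
def SOset (d : ℕ) : Set (Matrix (Fin d) (Fin d) ℝ) :=
  {A | A * A.transpose = 1 ∧ A.det = 1}

/-- Mutual general position of two polytopes. -/
def MutualGenPos (P Q : Set (Euc d)) : Prop :=
  P ∩ Q = ∅ ∨
    ∀ j ≤ d, ∀ F ∈ facesOfDim (P ∩ Q) j,
      ∃ k, j ≤ k ∧ k ≤ d ∧ ∃ G ∈ facesOfDim P k, ∃ H ∈ facesOfDim Q (d + j - k),
        F = closure (intrinsicInterior ℝ G ∩ intrinsicInterior ℝ H)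

/-- Mutual general position of a finite family of polytopes. -/
def MutualGenPosFam {m : ℕ} (P : Fin m → Set (Euc d)) : Prop :=
  ∀ i : Fin m, ∀ J : Finset (Fin m), J.Nonempty → i ∉ J →
    MutualGenPos (P i) (⋂ l ∈ J, P l)

/-- `Q` is a standard representation of `S`: `S` is the union of the polytopes `Q i`,
which are in mutual general position. -/
def IsStandardRep {m : ℕ} (S : Set (Euc d)) (Q : Fin m → Set (Euc d)) : Prop :=
  (∀ i, IsPolytope (Q i)) ∧ MutualGenPosFam Q ∧ S = ⋃ i, Q i

/-- The inclusion-exclusion sum defining the GP-extension of `Φ`. -/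
def gpSum (Φ : Set (Euc d) → Set (Euc d) → ℝ) {m : ℕ}
    (Q : Fin m → Set (Euc d)) (A : Set (Euc d)) : ℝ :=
  ∑ J ∈ Finset.univ.powerset.filter (fun J : Finset (Fin m) => J.Nonempty),
    (-1 : ℝ) ^ (J.card + 1) *
      (if (⋂ i ∈ J, Q i).Nonempty then Φ (⋂ i ∈ J, Q i) A else 0)

/-- A closed halfspace. -/
def halfspace (u : Euc d) (t : ℝ) : Set (Euc d) := {x | ⟪x, u⟫ ≤ t}

/-- Translation invariance on polytopes. -/
def TranslationInvariant (φ : Set (Euc d) → ℝ) : Prop :=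
  ∀ P : Set (Euc d), IsPolytope P → ∀ x : Euc d, φ (shiftSet x P) = φ P

/-- Additivity on polytopes. -/
def AdditiveFunc (φ : Set (Euc d) → ℝ) : Prop :=
  ∀ P Q : Set (Euc d), IsPolytope P → IsPolytope Q → IsPolytope (P ∪ Q) →
    φ (P ∪ Q) + φ (P ∩ Q) = φ P + φ Q

/-- Weak continuity: continuity of `φ` under parallel displacements of the facets. -/
def WeaklyContinuous (φ : Set (Euc d) → ℝ) : Prop :=
  ∀ (N : ℕ) (u : Fin N → Euc d) (t : Fin N → ℝ), (∀ i, ‖u i‖ = 1) →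
    (⋂ i, halfspace (u i) (t i)).Nonempty →
    Bornology.IsBounded (⋂ i, halfspace (u i) (t i)) →
    ContinuousWithinAt (fun s : Fin N → ℝ => φ (⋂ i, halfspace (u i) (s i)))
      {s | (⋂ i, halfspace (u i) (s i)).Nonempty ∧
        Bornology.IsBounded (⋂ i, halfspace (u i) (s i))} t

/-- Standard functional: translation invariant, additive and weakly continuous. -/
def IsStandardFunctional (φ : Set (Euc d) → ℝ) : Prop :=
  TranslationInvariant φ ∧ AdditiveFunc φ ∧ WeaklyContinuous φ

/-- The cone spanned by a set. -/
def coneOf (p : Set (Euc d)) : Set (Euc d) := {x | ∃ t : ℝ, 0 ≤ t ∧ ∃ y ∈ p, x = t • y}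

/-- Simple additivity of a function on `(d-j-1)`-dimensional spherical polytopes. -/
def SimplyAdditive {d : ℕ} (j : ℕ) (f : Set (Euc d) → ℝ) : Prop :=
  ∀ (r : ℕ) (p : Set (Euc d)) (q : Fin r → Set (Euc d)),
    IsSphericalPolytope d j p → (∀ i, IsSphericalPolytope d j (q i)) →
    p = ⋃ i, q i →
    (∀ i l, i ≠ l →
      intrinsicInterior ℝ (coneOf (q i)) ∩ intrinsicInterior ℝ (coneOf (q l)) = ∅) →
    f p = ∑ i, f (q i)

/-- A polyhedral cone: the positive hull of finitely many vectors. -/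
def IsPolyhedralCone (C : Set (Euc d)) : Prop :=
  ∃ S : Finset (Euc d),
    C = {x | ∃ c : Euc d → ℝ, (∀ v ∈ S, 0 ≤ c v) ∧ x = ∑ v ∈ S, c v • v}

/-- The unit cube `[-1/2, 1/2]^d`. -/
def cube (d : ℕ) : Set (Euc d) := {x | ∀ i, |x i| ≤ 1 / 2}

end

/-!
If the minimal faces `G` of `P` and `H` of `Q + x` at a common point `z` have directions spanning
`ℝ^d`, then the face of `P ∩ (Q + x)` having `z` in its relative interior is `G ∩ H`, its affine
hull is `aff G ∩ aff H`, so its dimension is `dim G + dim H - d`, and it is the closure of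
`relint G ∩ relint H`. Minimal faces of a polytope are convex hulls of vertex subsets, so when this
spanning condition fails somewhere, `x ∈ aff T - aff T'` for vertex subsets `T` of `P` and `T'` of
`Q` whose directions do not span. Each such set lies in a proper affine subspace, and there are
finitely many of them.
-/

section MinimalFace

variable {E : Type*} [AddCommGroup E] [Module ℝ E] {C D : Set E} {y z : E}

-- For convex `C` and `z ∈ C`, this is the smallest face of `C` containing `z`.
def minimalFace (C : Set E) (z : E) : Set E :=
  {y | y ∈ C ∧ ∃ t < (0 : ℝ), z + t • (y - z) ∈ C}

lemma minimalFace_subset : minimalFace C z ⊆ C := fun _ hy => hy.1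

lemma self_mem_minimalFace (hz : z ∈ C) : z ∈ minimalFace C z :=
  ⟨hz, -1, by norm_num, by simpa using hz⟩

lemma mem_minimalFace_iff_openSegment :
    y ∈ minimalFace C z ↔ y ∈ C ∧ ∃ w ∈ C, z ∈ openSegment ℝ y w := by
  refine and_congr_right fun _ => ⟨?_, ?_⟩
  · rintro ⟨t, ht, hw⟩
    have : 1 - t ≠ 0 := by linarith
    refine ⟨_, hw, -t / (1 - t), 1 / (1 - t), by bound, by bound, by field_simp; ring, ?_⟩
    match_scalars <;> field_simp <;> ring
  · rintro ⟨w, hw, a, b, ha, hb, hab, rfl⟩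
    refine ⟨-a / b, div_neg_of_neg_of_pos (neg_neg_of_pos ha) hb, ?_⟩
    obtain rfl : a = 1 - b := by linarith
    convert hw using 1
    match_scalars <;> field_simp <;> ring

lemma Convex.add_smul_sub_mem_of_le (hC : Convex ℝ C) (hz : z ∈ C)
    {t s : ℝ} (ht : z + t • (y - z) ∈ C) (hts : t ≤ s) (hs : s ≤ 0) : z + s • (y - z) ∈ C := by
  rcases (hts.trans hs).lt_or_eq with htn | rfl
  · have := hC.add_smul_sub_mem hz ht ⟨div_nonneg_of_nonpos hs htn.le, div_le_one_of_ge hts htn.le⟩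
    convert this using 2
    rw [add_sub_cancel_left, smul_smul, div_mul_cancel₀ _ htn.ne]
  · obtain rfl : s = 0 := le_antisymm hs hts
    simpa using hz

lemma convex_minimalFace (hC : Convex ℝ C) (hz : z ∈ C) : Convex ℝ (minimalFace C z) := by
  rintro y₁ ⟨hy₁, t₁, ht₁, h₁⟩ y₂ ⟨hy₂, t₂, ht₂, h₂⟩ a b ha hb hab
  refine ⟨hC hy₁ hy₂ ha hb hab, max t₁ t₂, max_lt ht₁ ht₂, ?_⟩
  have := hC (hC.add_smul_sub_mem_of_le hz h₁ (le_max_left _ _) (max_lt ht₁ ht₂).le)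
    (hC.add_smul_sub_mem_of_le hz h₂ (le_max_right _ _) (max_lt ht₁ ht₂).le) ha hb hab
  convert this using 1
  obtain rfl : a = 1 - b := by linarith
  module

lemma minimalFace_inter (hC : Convex ℝ C) (hD : Convex ℝ D) (hzC : z ∈ C) (hzD : z ∈ D) :
    minimalFace (C ∩ D) z = minimalFace C z ∩ minimalFace D z := by
  refine Subset.antisymm (fun y ⟨hy, t, ht, h⟩ => ⟨⟨hy.1, t, ht, h.1⟩, ⟨hy.2, t, ht, h.2⟩⟩) ?_
  rintro y ⟨⟨hyC, t₁, ht₁, h₁⟩, ⟨hyD, t₂, ht₂, h₂⟩⟩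
  have ht : max t₁ t₂ < 0 := max_lt ht₁ ht₂
  exact ⟨⟨hyC, hyD⟩, max t₁ t₂, ht, hC.add_smul_sub_mem_of_le hzC h₁ (le_max_left _ _) ht.le,
    hD.add_smul_sub_mem_of_le hzD h₂ (le_max_right _ _) ht.le⟩

variable {F S : Set E} {x₁ x₂ w g : E}

-- `w'` is the point where the ray from `x₁` through `z` meets the segment `[x₂, w]`.
lemma Convex.exists_mem_openSegment_of_mem_openSegment (hC : Convex ℝ C) (hx₂ : x₂ ∈ C)
    (hw : w ∈ C) (hg : g ∈ openSegment ℝ x₁ x₂) (hz : z ∈ openSegment ℝ g w) :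
    ∃ w' ∈ C, z ∈ openSegment ℝ x₁ w' := by
  obtain ⟨c, e, hc, he, hce, rfl⟩ := hg
  obtain ⟨a, b, ha, hb, hab, rfl⟩ := hz
  have hac : a * c < 1 := by nlinarith
  have hne : 1 - a * c ≠ 0 := by linarith
  refine ⟨(a * e / (1 - a * c)) • x₂ + (b / (1 - a * c)) • w,
    hC hx₂ hw (by bound) (by bound) ?_, a * c, 1 - a * c, by positivity, by linarith, by ring, ?_⟩
  · field_simp; linear_combination hab + a * hce
  · match_scalars <;> field_simp

lemma Convex.isExtreme_minimalFace (hC : Convex ℝ C) : IsExtreme ℝ C (minimalFace C z) := by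
  refine ⟨minimalFace_subset, fun x₁ hx₁ x₂ hx₂ g hg hseg => ?_⟩
  obtain ⟨-, w, hw, hz⟩ := mem_minimalFace_iff_openSegment.1 hg
  obtain ⟨w', hw', hz'⟩ := hC.exists_mem_openSegment_of_mem_openSegment hx₂ hw hseg hz
  exact mem_minimalFace_iff_openSegment.2 ⟨hx₁, w', hw', hz'⟩

lemma IsExtreme.minimalFace_subset (hF : IsExtreme ℝ C F) (hz : z ∈ F) :
    minimalFace C z ⊆ F := fun y hy => by
  obtain ⟨hy, w, hw, hzyw⟩ := mem_minimalFace_iff_openSegment.1 hy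
  exact hF.left_mem_of_mem_openSegment hy hw hz hzyw

-- `p - w i • (v i - p)` is again a convex combination of the `v j`, so `v i` lies in the
-- minimal face of `C` at `p`.
lemma IsExtreme.mem_of_sum_smul_mem {ι : Type*} {t : Finset ι} {w : ι → ℝ} {v : ι → E}
    (hC : Convex ℝ C) (hF : IsExtreme ℝ C F) (hw₀ : ∀ j ∈ t, 0 ≤ w j) (hw₁ : ∑ j ∈ t, w j = 1)
    (hv : ∀ j ∈ t, v j ∈ C) (hp : ∑ j ∈ t, w j • v j ∈ F) {i : ι} (hi : i ∈ t)
    (hwi : 0 < w i) : v i ∈ F := by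
  set p := ∑ j ∈ t, w j • v j
  set w' : ι → ℝ := fun j => (1 + w i) * w j - if j = i then w i else 0
  have hw'₀ : ∀ j ∈ t, 0 ≤ w' j := fun j hj => by
    by_cases hji : j = i
    · subst hji; simp only [w', ↓reduceIte]; nlinarith
    · simp only [w', if_neg hji, sub_zero]; exact mul_nonneg (by linarith) (hw₀ j hj)
  have hw'₁ : ∑ j ∈ t, w' j = 1 := by
    simp only [w', Finset.sum_sub_distrib, ← Finset.mul_sum, hw₁, Finset.sum_ite_eq', if_pos hi]
    ring
  have hsum : ∑ j ∈ t, w' j • v j = p + (-w i) • (v i - p) := by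
    simp only [w', sub_smul, Finset.sum_sub_distrib, mul_smul, ← Finset.smul_sum, ite_smul,
      zero_smul, Finset.sum_ite_eq', if_pos hi]
    module
  refine hF.minimalFace_subset hp ⟨hv i hi, -w i, by linarith, ?_⟩
  exact hsum ▸ hC.sum_mem hw'₀ hw'₁ hv

lemma IsExtreme.eq_convexHull_inter (hF : IsExtreme ℝ (convexHull ℝ S) F) (hFc : Convex ℝ F) :
    F = convexHull ℝ (S ∩ F) := by
  refine Subset.antisymm (fun p hp => ?_) (convexHull_min inter_subset_right hFc)
  obtain ⟨ι, t, w, v, hw₀, hw₁, hv, hpv⟩ := (convexHull_eq S).subset (hF.1 hp)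
  rw [Finset.centerMass_eq_of_sum_1 _ _ hw₁] at hpv
  subst hpv
  have hpos : ∀ j ∈ t, w j ≠ 0 → 0 < w j := fun j hj h => (hw₀ j hj).lt_of_ne' h
  rw [← Finset.sum_filter_of_ne (p := fun j => w j ≠ 0) fun j _ h => by simp_all]
  refine (convex_convexHull ℝ _).sum_mem (fun j hj => hw₀ j (Finset.mem_filter.1 hj).1)
    (by rwa [Finset.sum_filter_ne_zero]) fun j hj => subset_convexHull ℝ _ ?_
  obtain ⟨hj, hj0⟩ := Finset.mem_filter.1 hj
  exact ⟨hv j hj, hF.mem_of_sum_smul_mem (convex_convexHull ℝ S) hw₀ hw₁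
    (fun k hk => subset_convexHull ℝ S (hv k hk)) hp hj (hpos j hj hj0)⟩

lemma minimalFace_convexHull (hz : z ∈ convexHull ℝ S) :
    minimalFace (convexHull ℝ S) z = convexHull ℝ (S ∩ minimalFace (convexHull ℝ S) z) :=
  (convex_convexHull ℝ S).isExtreme_minimalFace.eq_convexHull_inter
    (convex_minimalFace (convex_convexHull ℝ S) hz)

lemma affineSpan_minimalFace_convexHull (hz : z ∈ convexHull ℝ S) :
    affineSpan ℝ (minimalFace (convexHull ℝ S) z)
      = affineSpan ℝ (S ∩ minimalFace (convexHull ℝ S) z) :=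
  (congrArg (affineSpan ℝ) (minimalFace_convexHull hz)).trans (affineSpan_convexHull _)

end MinimalFace

section IntrinsicInterior

open Filter Topology

variable {E : Type*} [NormedAddCommGroup E] [NormedSpace ℝ E] {C F G H s : Set E} {p w y z : E}

lemma mem_intrinsicInterior_iff_dist : z ∈ intrinsicInterior ℝ s ↔
    z ∈ s ∧ ∃ ε > 0, ∀ y ∈ affineSpan ℝ s, dist y z < ε → y ∈ s := by
  constructor
  · intro hz
    refine ⟨intrinsicInterior_subset hz, ?_⟩
    obtain ⟨z', hz', rfl⟩ := mem_intrinsicInterior.1 hz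
    obtain ⟨ε, hε, hball⟩ := Metric.mem_nhds_iff.1 (mem_interior_iff_mem_nhds.1 hz')
    exact ⟨ε, hε, fun y hy hyz => hball (show dist (⟨y, hy⟩ : affineSpan ℝ s) z' < ε from hyz)⟩
  · rintro ⟨hzs, ε, hε, hball⟩
    refine mem_intrinsicInterior.2 ⟨⟨z, subset_affineSpan ℝ s hzs⟩, ?_, rfl⟩
    exact mem_interior_iff_mem_nhds.2
      (Metric.mem_nhds_iff.2 ⟨ε, hε, fun y hy => hball y y.2 hy⟩)

-- The homothety with centre `w` and ratio `a` maps a relative ball around `p` onto one around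
-- `a • p + b • w`, and maps `s` into itself.
lemma Convex.openSegment_subset_intrinsicInterior (hs : Convex ℝ s)
    (hp : p ∈ intrinsicInterior ℝ s) (hw : w ∈ s) : openSegment ℝ p w ⊆ intrinsicInterior ℝ s := by
  rintro q ⟨a, b, ha, hb, hab, rfl⟩
  obtain ⟨hps, ε, hε, hball⟩ := mem_intrinsicInterior_iff_dist.1 hp
  have hq := hs hps hw ha.le hb.le hab
  refine mem_intrinsicInterior_iff_dist.2 ⟨hq, a * ε, by positivity, fun y hy hyq => ?_⟩
  have hp' : p + a⁻¹ • (y - (a • p + b • w)) ∈ s := by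
    refine hball _ ?_ ?_
    · rw [add_comm]
      exact AffineSubspace.smul_vsub_vadd_mem _ _ hy (subset_affineSpan ℝ s hq)
        (subset_affineSpan ℝ s hps)
    · rwa [dist_eq_norm, add_sub_cancel_left, norm_smul, Real.norm_of_nonneg (inv_nonneg.2 ha.le),
        ← dist_eq_norm, inv_mul_lt_iff₀ ha]
  convert hs hp' hw ha.le hb.le hab using 1
  rw [smul_add, smul_smul, mul_inv_cancel₀ ha.ne', one_smul]
  abel

lemma eventually_add_smul_sub_mem_of_mem_intrinsicInterior (hz : z ∈ intrinsicInterior ℝ s)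
    (hy : y ∈ affineSpan ℝ s) : ∀ᶠ t in 𝓝 (0 : ℝ), z + t • (y - z) ∈ s := by
  obtain ⟨hzs, ε, hε, hball⟩ := mem_intrinsicInterior_iff_dist.1 hz
  have hcont : Continuous fun t : ℝ => z + t • (y - z) := by fun_prop
  have hlim : Tendsto (fun t : ℝ => z + t • (y - z)) (𝓝 0) (𝓝 z) := hcont.tendsto' 0 z (by simp)
  filter_upwards [hlim (Metric.ball_mem_nhds z hε)] with t ht
  refine hball _ ?_ ht
  simpa [vsub_eq_sub, vadd_eq_add, add_comm] using
    AffineSubspace.smul_vsub_vadd_mem _ t hy (subset_affineSpan ℝ s hzs) (subset_affineSpan ℝ s hzs)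

lemma affineSpan_inter_of_mem_intrinsicInterior (hzG : z ∈ intrinsicInterior ℝ G)
    (hzH : z ∈ intrinsicInterior ℝ H) :
    affineSpan ℝ (G ∩ H) = affineSpan ℝ G ⊓ affineSpan ℝ H := by
  refine le_antisymm (le_inf (affineSpan_mono ℝ inter_subset_left)
    (affineSpan_mono ℝ inter_subset_right)) fun y ⟨hyG, hyH⟩ => ?_
  have hnear := (eventually_add_smul_sub_mem_of_mem_intrinsicInterior hzG hyG).and
    (eventually_add_smul_sub_mem_of_mem_intrinsicInterior hzH hyH)
  obtain ⟨t, ⟨htG, htH⟩, ht⟩ :=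
    ((hnear.filter_mono nhdsWithin_le_nhds).and self_mem_nhdsWithin).exists (f := 𝓝[≠] (0 : ℝ))
  have hz : z ∈ affineSpan ℝ (G ∩ H) :=
    subset_affineSpan ℝ _ ⟨intrinsicInterior_subset hzG, intrinsicInterior_subset hzH⟩
  have := AffineSubspace.smul_vsub_vadd_mem _ t⁻¹
    (subset_affineSpan ℝ (G ∩ H) (show z + t • (y - z) ∈ G ∩ H from ⟨htG, htH⟩)) hz hz
  simpa [smul_smul, inv_mul_cancel₀ (show t ≠ 0 from ht)] using this

lemma closure_intrinsicInterior_inter_intrinsicInterior (hG : Convex ℝ G) (hH : Convex ℝ H)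
    (hGc : IsClosed G) (hHc : IsClosed H) (hzG : z ∈ intrinsicInterior ℝ G)
    (hzH : z ∈ intrinsicInterior ℝ H) :
    closure (intrinsicInterior ℝ G ∩ intrinsicInterior ℝ H) = G ∩ H := by
  refine Subset.antisymm (closure_minimal (inter_subset_inter intrinsicInterior_subset
    intrinsicInterior_subset) (hGc.inter hHc)) fun y ⟨hyG, hyH⟩ => ?_
  refine closure_mono (subset_inter (hG.openSegment_subset_intrinsicInterior hzG hyG)
    (hH.openSegment_subset_intrinsicInterior hzH hyH)) ?_
  exact segment_subset_closure_openSegment (right_mem_segment ℝ z y)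

lemma Convex.mem_intrinsicInterior_minimalFace [FiniteDimensional ℝ E] (hC : Convex ℝ C)
    (hz : z ∈ C) :
    z ∈ intrinsicInterior ℝ (minimalFace C z) := by
  have hconv := convex_minimalFace hC hz
  obtain ⟨p, hp⟩ := Set.Nonempty.intrinsicInterior hconv ⟨z, self_mem_minimalFace hz⟩
  obtain ⟨hpC, w, hwC, hzpw⟩ := mem_minimalFace_iff_openSegment.1 (intrinsicInterior_subset hp)
  have hw : w ∈ minimalFace C z :=
    mem_minimalFace_iff_openSegment.2 ⟨hwC, p, hpC, openSegment_symm ℝ p w ▸ hzpw⟩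
  exact hconv.openSegment_subset_intrinsicInterior hp hw hzpw

lemma IsExtreme.eq_minimalFace (hF : IsExtreme ℝ C F) (hz : z ∈ intrinsicInterior ℝ F) :
    F = minimalFace C z := by
  refine Subset.antisymm (fun y hy => ?_) (hF.minimalFace_subset (intrinsicInterior_subset hz))
  obtain ⟨t, ht, htneg⟩ := ((eventually_add_smul_sub_mem_of_mem_intrinsicInterior hz
    (subset_affineSpan ℝ F hy)).filter_mono nhdsWithin_le_nhds |>.and
    self_mem_nhdsWithin).exists (f := 𝓝[<] (0 : ℝ))
  exact ⟨hF.subset hy, t, htneg, hF.subset ht⟩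

end IntrinsicInterior

section Translates

variable {E : Type*} [NormedAddCommGroup E] [NormedSpace ℝ E] [MeasurableSpace E] [BorelSpace E]
  [FiniteDimensional ℝ E]

def nonTransversalTranslates (S S' : Set E) : Set E :=
  ⋃ T ∈ 𝒫 S, ⋃ T' ∈ 𝒫 S',
    ⋃ (_ : (affineSpan ℝ T).direction ⊔ (affineSpan ℝ T').direction ≠ ⊤),
      (affineSpan ℝ T : Set E) - affineSpan ℝ T'

lemma addHaar_sub_affineSubspace (μ : Measure E) [μ.IsAddHaarMeasure]
    {A B : AffineSubspace ℝ E} (h : A.direction ⊔ B.direction ≠ ⊤) :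
    μ ((A : Set E) - B) = 0 := by
  rcases (A : Set E).eq_empty_or_nonempty with hA | ⟨a₀, ha₀⟩
  · simp [hA]
  rcases (B : Set E).eq_empty_or_nonempty with hB | ⟨b₀, hb₀⟩
  · simp [hB]
  refine measure_mono_null ?_ (Measure.addHaar_affineSubspace μ
    (AffineSubspace.mk' (a₀ - b₀) (A.direction ⊔ B.direction)) fun htop => h ?_)
  · rintro _ ⟨a, ha, b, hb, rfl⟩
    rw [SetLike.mem_coe, AffineSubspace.mem_mk', vsub_eq_sub,
      show a - b - (a₀ - b₀) = (a -ᵥ a₀) - (b -ᵥ b₀) by simp only [vsub_eq_sub]; abel]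
    exact sub_mem (Submodule.mem_sup_left (AffineSubspace.vsub_mem_direction ha ha₀))
      (Submodule.mem_sup_right (AffineSubspace.vsub_mem_direction hb hb₀))
  · rw [← AffineSubspace.direction_mk' (a₀ - b₀) (A.direction ⊔ B.direction), htop,
      AffineSubspace.direction_top]

lemma addHaar_nonTransversalTranslates (μ : Measure E) [μ.IsAddHaarMeasure] {S S' : Set E}
    (hS : S.Finite) (hS' : S'.Finite) : μ (nonTransversalTranslates S S') = 0 :=
  (measure_biUnion_null_iff hS.powerset.countable).2 fun _ _ =>
    (measure_biUnion_null_iff hS'.powerset.countable).2 fun _ _ =>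
      measure_iUnion_null fun h => addHaar_sub_affineSubspace μ h

end Translates

section Polytopes

variable {d : ℕ} {C G H P Q : Set (Euc d)} {x z : Euc d}

lemma mem_shiftSet : z ∈ shiftSet x C ↔ z - x ∈ C :=
  ⟨by rintro ⟨c, hc, rfl⟩; simpa using hc, fun h => ⟨z - x, h, sub_add_cancel z x⟩⟩

lemma shiftSet_eq_vadd (x : Euc d) (C : Set (Euc d)) : shiftSet x C = x +ᵥ C :=
  image_congr fun c _ => add_comm c x

lemma dirSpace_shiftSet (x : Euc d) (C : Set (Euc d)) : dirSpace (shiftSet x C) = dirSpace C := by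
  rw [dirSpace, shiftSet_eq_vadd, ← AffineSubspace.pointwise_vadd_span,
    AffineSubspace.pointwise_vadd_direction, dirSpace]

lemma minimalFace_shiftSet :
    minimalFace (shiftSet x C) z = shiftSet x (minimalFace C (z - x)) := by
  ext y
  simp only [mem_shiftSet, minimalFace, mem_ofPred_eq,
    show ∀ t : ℝ, z + t • (y - z) - x = z - x + t • (y - x - (z - x)) from fun t => by module]

lemma IsPolytope.shiftSet (hQ : IsPolytope Q) (x : Euc d) : IsPolytope (shiftSet x Q) := by
  obtain ⟨S, hS, rfl⟩ := hQ
  refine ⟨S.image (· + x), hS.image _, ?_⟩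
  rw [Finset.coe_image, ← _root_.shiftSet, shiftSet_eq_vadd, shiftSet_eq_vadd, convexHull_vadd]

lemma IsPolytope.convex (hP : IsPolytope P) : Convex ℝ P := by
  obtain ⟨S, -, rfl⟩ := hP
  exact convex_convexHull ℝ _

lemma IsPolytope.isClosed_minimalFace (hP : IsPolytope P) (hz : z ∈ P) :
    IsClosed (minimalFace P z) := by
  obtain ⟨S, -, rfl⟩ := hP
  rw [minimalFace_convexHull hz]
  exact (S.finite_toSet.subset inter_subset_left).isClosed_convexHull ℝ

lemma isFace_minimalFace (hC : Convex ℝ C) (hz : z ∈ C) : IsFace C (minimalFace C z) :=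
  ⟨⟨z, self_mem_minimalFace hz⟩, convex_minimalFace hC hz, hC.isExtreme_minimalFace⟩

lemma setDim_le (F : Set (Euc d)) : setDim F ≤ d :=
  (Submodule.finrank_le _).trans_eq finrank_euclideanSpace_fin

lemma setDim_add_setDim (hzG : z ∈ intrinsicInterior ℝ G) (hzH : z ∈ intrinsicInterior ℝ H)
    (h : dirSpace G ⊔ dirSpace H = ⊤) : setDim G + setDim H = d + setDim (G ∩ H) := by
  have hinf : dirSpace (G ∩ H) = dirSpace G ⊓ dirSpace H := by
    rw [dirSpace, affineSpan_inter_of_mem_intrinsicInterior hzG hzH]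
    exact AffineSubspace.direction_inf_of_mem
      (subset_affineSpan ℝ G (intrinsicInterior_subset hzG))
      (subset_affineSpan ℝ H (intrinsicInterior_subset hzH))
  have := Submodule.finrank_sup_add_finrank_inf_eq (dirSpace G) (dirSpace H)
  rw [h, finrank_top, finrank_euclideanSpace_fin, ← hinf] at this
  exact this.symm

theorem mutualGenPos_of_transversal (hP : IsPolytope P) (hQ : IsPolytope Q)
    (h : ∀ z ∈ P ∩ Q, dirSpace (minimalFace P z) ⊔ dirSpace (minimalFace Q z) = ⊤) :
    MutualGenPos P Q := by
  refine Or.inr fun j _ F ⟨⟨hFne, hFc, hF⟩, hFj⟩ => ?_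
  obtain ⟨z, hz⟩ := hFne.intrinsicInterior hFc
  obtain ⟨hzP, hzQ⟩ := hF.subset (intrinsicInterior_subset hz)
  have hFPQ : F = minimalFace P z ∩ minimalFace Q z :=
    (hF.eq_minimalFace hz).trans (minimalFace_inter hP.convex hQ.convex hzP hzQ)
  have hzG := hP.convex.mem_intrinsicInterior_minimalFace hzP
  have hzH := hQ.convex.mem_intrinsicInterior_minimalFace hzQ
  have hdim := setDim_add_setDim hzG hzH (h z ⟨hzP, hzQ⟩)
  rw [← hFPQ, hFj] at hdim
  refine ⟨_, by linarith [setDim_le (minimalFace Q z)], setDim_le _, _,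
    ⟨isFace_minimalFace hP.convex hzP, rfl⟩, _, ⟨isFace_minimalFace hQ.convex hzQ, by omega⟩, ?_⟩
  rw [closure_intrinsicInterior_inter_intrinsicInterior (convex_minimalFace hP.convex hzP)
    (convex_minimalFace hQ.convex hzQ) (hP.isClosed_minimalFace hzP)
    (hQ.isClosed_minimalFace hzQ) hzG hzH, hFPQ]

lemma mem_nonTransversalTranslates {S S' : Set (Euc d)}
    (hz : z ∈ convexHull ℝ S ∩ shiftSet x (convexHull ℝ S'))
    (h : dirSpace (minimalFace (convexHull ℝ S) z)
      ⊔ dirSpace (minimalFace (shiftSet x (convexHull ℝ S')) z) ≠ ⊤) :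
    x ∈ nonTransversalTranslates S S' := by
  obtain ⟨hzP, hzQ⟩ := hz
  rw [mem_shiftSet] at hzQ
  rw [minimalFace_shiftSet, dirSpace_shiftSet] at h
  have hT := affineSpan_minimalFace_convexHull hzP
  have hT' := affineSpan_minimalFace_convexHull hzQ
  simp only [nonTransversalTranslates, mem_iUnion]
  refine ⟨S ∩ minimalFace (convexHull ℝ S) z, inter_subset_left,
    S' ∩ minimalFace (convexHull ℝ S') (z - x), inter_subset_left, ?_, z, ?_, z - x, ?_,
    sub_sub_cancel z x⟩
  · rwa [← hT, ← hT']
  · rw [← hT]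
    exact subset_affineSpan ℝ _ (self_mem_minimalFace hzP)
  · rw [← hT']
    exact subset_affineSpan ℝ _ (self_mem_minimalFace hzQ)

end Polytopes

theorem stmt_18_general {d : ℕ} (P Q : Set (Euc d))
    (hP : IsPolytope P) (hQ : IsPolytope Q) :
    volume {x : Euc d | ¬ MutualGenPos P (shiftSet x Q)} = 0 := by
  obtain ⟨S, -, rfl⟩ := id hP
  obtain ⟨S', -, rfl⟩ := id hQ
  refine measure_mono_null (fun x hx => ?_)
    (addHaar_nonTransversalTranslates volume S.finite_toSet S'.finite_toSet)
  by_contra hx'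
  exact hx (mutualGenPos_of_transversal hP (hQ.shiftSet x) fun z hz =>
    not_not.1 fun h => hx' (mem_nonTransversalTranslates hz h))

/-- for polytopes `P`, `Q`, almost every translate of `Q` is in mutual general
position with `P`. -/
theorem stmt_18 {d : ℕ} (hd : 1 ≤ d) (P Q : Set (Euc d))
    (hP : IsPolytope P) (hQ : IsPolytope Q) :
    volume {x : Euc d | ¬ MutualGenPos P (shiftSet x Q)} = 0 :=
  stmt_18_general P Q hP hQ
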